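/- Let β=(β_n)_{n∈ℕ} be a Cantor base with x_β<+∞. If a is an infinite word over ℕ with a_n∈[[0,⌈β_n⌉−1]] for all n∈ℕ and val_β(a)∈(x_β−1,x_β], then a >_lex ℓ*_β(x_β−1). -/

import Mathlib

open Filter Topology

/-- A Cantor real base: a sequence of reals `> 1` whose infinite product diverges to `+∞`. -/
structure IsCantorBase (β : ℕ → ℝ) : Prop where
  one_lt : ∀ n, 1 < β n
  prod_tendsto : Tendsto (fun N => ∏ i ∈ Finset.range N, β i) atTop atTop

/-- The product `β_0 ⋯ β_n`. -/
noncomputable def prodUpTo (β : ℕ → ℝ) (n : ℕ) : ℝ := ∏ i ∈ Finset.range (n + 1), β i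

/-- The shifted base `β^(n) = (β_n, β_{n+1}, …)`. -/
def shiftBase (β : ℕ → ℝ) (n : ℕ) : ℕ → ℝ := fun m => β (n + m)

/-- `x_β = Σ_{n} (⌈β_n⌉ - 1)/(β_0 ⋯ β_n)`. -/
noncomputable def xB (β : ℕ → ℝ) : ℝ := ∑' n, ((⌈β n⌉ : ℝ) - 1) / prodUpTo β n

/-- The condition `x_β < +∞`, i.e. the series defining `x_β` converges. -/
def XBSummable (β : ℕ → ℝ) : Prop :=
  Summable (fun n => ((⌈β n⌉ : ℝ) - 1) / prodUpTo β n)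

/-- `val_β(a) = Σ_n a_n/(β_0 ⋯ β_n)`. -/
noncomputable def valB (β : ℕ → ℝ) (a : ℕ → ℤ) : ℝ := ∑' n, (a n : ℝ) / prodUpTo β n

/-- The digit condition `a_n ∈ [[0, ⌈β_n⌉ - 1]]` for all `n`. -/
def validWord (β : ℕ → ℝ) (a : ℕ → ℤ) : Prop := ∀ n, 0 ≤ a n ∧ a n ≤ ⌈β n⌉ - 1

/-- The flip map `θ_β`. -/
noncomputable def theta (β : ℕ → ℝ) (a : ℕ → ℤ) : ℕ → ℤ := fun n => ⌈β n⌉ - 1 - a n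

/-- The greedy remainders `r_{β,n}(x)`. -/
noncomputable def greedyR (β : ℕ → ℝ) (x : ℝ) : ℕ → ℝ
  | 0 => β 0 * x - (⌊β 0 * x⌋ : ℝ)
  | n + 1 => β (n + 1) * greedyR β x n - (⌊β (n + 1) * greedyR β x n⌋ : ℝ)

/-- The greedy digits `ε_{β,n}(x)`; `greedyDigit β x` is the greedy β-expansion `d_β(x)`. -/
noncomputable def greedyDigit (β : ℕ → ℝ) (x : ℝ) : ℕ → ℤ
  | 0 => ⌊β 0 * x⌋
  | n + 1 => ⌊β (n + 1) * greedyR β x n⌋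

/-- The lazy remainders `s_{β,n}(x)`. -/
noncomputable def lazyS (β : ℕ → ℝ) (x : ℝ) : ℕ → ℝ
  | 0 => β 0 * x - (⌈β 0 * x - xB (shiftBase β 1)⌉ : ℝ)
  | n + 1 => β (n + 1) * lazyS β x n -
      (⌈β (n + 1) * lazyS β x n - xB (shiftBase β (n + 2))⌉ : ℝ)

/-- The lazy digits `ξ_{β,n}(x)`; `lazyDigit β x` is the lazy β-expansion `ℓ_β(x)`. -/
noncomputable def lazyDigit (β : ℕ → ℝ) (x : ℝ) : ℕ → ℤ
  | 0 => ⌈β 0 * x - xB (shiftBase β 1)⌉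
  | n + 1 => ⌈β (n + 1) * lazyS β x n - xB (shiftBase β (n + 2))⌉

/-- Strict lexicographic order on infinite words. -/
def lexLt (a b : ℕ → ℤ) : Prop := ∃ k, (∀ i < k, a i = b i) ∧ a k < b k

/-- Lexicographic order on infinite words. -/
def lexLe (a b : ℕ → ℤ) : Prop := lexLt a b ∨ a = b

/-- `D_β`, the set of greedy β-expansions of points of `[0,1)`. -/
def greedySet (β : ℕ → ℝ) : Set (ℕ → ℤ) :=
  {a | ∃ x ∈ Set.Ico (0 : ℝ) 1, a = greedyDigit β x}

/-- `D'_β`, the set of lazy β-expansions of points of `(x_β - 1, x_β]`. -/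
def lazySet (β : ℕ → ℝ) : Set (ℕ → ℤ) :=
  {a | ∃ x ∈ Set.Ioc (xB β - 1) (xB β), a = lazyDigit β x}

/-- `Δ'_β = ⋃_n D'_{β^(n)}`. -/
def deltaSet (β : ℕ → ℝ) : Set (ℕ → ℤ) := ⋃ n, lazySet (shiftBase β n)

/-!
The lazy expansion is lexicographically monotone, and a word `a` with admissible digits that
is lexicographically at most `ℓ_β(y)` has value at most `y`. Both follow by cutting the words
at their first difference `k`: there the smaller word loses at least `1/(β_0 ⋯ β_k)`, while the
lazy remainder lies in `(x_{β^(k+1)} - 1, x_{β^(k+1)}]` and the tail of an admissible word is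
worth at most `x_{β^(k+1)}`, both on the scale `1/(β_0 ⋯ β_k)`; equal words are handled by
letting `k → ∞`. Taking `x_β - 1 < y < val_β(a)` gives `ℓ_β(y) <_lex a`, and `ℓ*_β(x_β - 1)`,
whose prefixes are those of `ℓ_β(z)` for `z` slightly above `x_β - 1`, is at most `ℓ_β(y)`.
-/

lemma Filter.Tendsto.eventually_toLex_lt {ι α : Type*} [PartialOrder α] [TopologicalSpace α]
    [DiscreteTopology α] {l : Filter ι} {f : ι → ℕ → α} {L b : ℕ → α}
    (hf : Tendsto f l (𝓝 L)) (hb : toLex b < toLex L) : ∀ᶠ z in l, toLex b < toLex (f z) := by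
  obtain ⟨k, hbL, hk⟩ : ∃ k, (∀ i < k, b i = L i) ∧ b k < L k := hb
  have hcoord : ∀ i, ∀ᶠ z in l, f z i = L i := fun i =>
    tendsto_pure.1 (by simpa only [nhds_discrete] using tendsto_pi_nhds.1 hf i)
  filter_upwards [(Finset.range (k + 1)).eventually_all.2 fun i _ => hcoord i] with z hz
  have hzL : ∀ i ≤ k, f z i = L i := fun i hi => hz i (Finset.mem_range.2 (Nat.lt_succ_of_le hi))
  show ∃ k, (∀ i < k, b i = f z i) ∧ b k < f z k
  exact ⟨k, fun i hi => (hbL i hi).trans (hzL i hi.le).symm, (hzL k le_rfl).symm ▸ hk⟩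

lemma sub_ceil_sub_mem_Ioc (t c : ℝ) : t - ⌈t - c⌉ ∈ Set.Ioc (c - 1) c :=
  ⟨by linarith [Int.ceil_lt_add_one (t - c)], by linarith [Int.le_ceil (t - c)]⟩

section CantorBase

variable {β : ℕ → ℝ}

lemma lazyS_mem_Ioc (x : ℝ) (n : ℕ) :
    lazyS β x n ∈ Set.Ioc (xB (shiftBase β (n + 1)) - 1) (xB (shiftBase β (n + 1))) := by
  cases n <;> exact sub_ceil_sub_mem_Ioc _ _

lemma prodUpTo_pos (hβ : ∀ n, 1 < β n) (n : ℕ) : 0 < prodUpTo β n :=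
  Finset.prod_pos fun i _ => one_pos.trans (hβ i)

lemma IsCantorBase.tendsto_inv_prodUpTo (hβ : IsCantorBase β) :
    Tendsto (fun n => (prodUpTo β n)⁻¹) atTop (𝓝 0) :=
  (hβ.prod_tendsto.comp (tendsto_add_atTop_nat 1)).inv_tendsto_atTop

lemma prodUpTo_zero : prodUpTo β 0 = β 0 := Finset.prod_range_one β

lemma prodUpTo_succ (n : ℕ) : prodUpTo β (n + 1) = prodUpTo β n * β (n + 1) :=
  Finset.prod_range_succ β (n + 1)

lemma prodUpTo_add (m n : ℕ) :
    prodUpTo β (n + (m + 1)) = prodUpTo β m * prodUpTo (shiftBase β (m + 1)) n := by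
  simp only [prodUpTo, shiftBase]
  rw [show n + (m + 1) + 1 = m + 1 + (n + 1) by omega, Finset.prod_range_add]

lemma xB_shiftBase (hβ : ∀ n, 1 < β n) (m : ℕ) :
    xB (shiftBase β (m + 1)) =
      prodUpTo β m * ∑' n, ((⌈β (n + (m + 1))⌉ : ℝ) - 1) / prodUpTo β (n + (m + 1)) := by
  rw [xB, ← tsum_mul_left]
  refine tsum_congr fun n => ?_
  have hm := (prodUpTo_pos hβ m).ne'
  rw [prodUpTo_add, shiftBase, add_comm (m + 1), ← mul_div_assoc, mul_div_mul_left _ _ hm]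

noncomputable def partialVal (β : ℕ → ℝ) (a : ℕ → ℤ) (n : ℕ) : ℝ :=
  ∑ i ∈ Finset.range (n + 1), (a i : ℝ) / prodUpTo β i

lemma partialVal_succ (a : ℕ → ℤ) (n : ℕ) :
    partialVal β a (n + 1) = partialVal β a n + a (n + 1) / prodUpTo β (n + 1) :=
  Finset.sum_range_succ _ (n + 1)

lemma partialVal_add_inv_le (hβ : ∀ n, 1 < β n) {a b : ℕ → ℤ} {k : ℕ}
    (hab : ∀ i < k, a i = b i) (hk : a k < b k) :
    partialVal β a k + (prodUpTo β k)⁻¹ ≤ partialVal β b k := by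
  have hdiff : partialVal β b k - partialVal β a k = ((b k : ℝ) - a k) / prodUpTo β k := by
    rw [partialVal, partialVal, ← Finset.sum_sub_distrib, Finset.sum_range_succ,
      Finset.sum_eq_zero fun i hi => by rw [hab i (Finset.mem_range.1 hi), sub_self], zero_add,
      sub_div]
  have hgap : (1 : ℝ) ≤ b k - a k := by exact_mod_cast Int.sub_pos_of_lt hk
  have := div_le_div_of_nonneg_right hgap (prodUpTo_pos hβ k).le
  rw [one_div] at this
  linarith

lemma partialVal_lazyDigit_add_lazyS_div (hβ : ∀ n, 1 < β n) (x : ℝ) (n : ℕ) :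
    partialVal β (lazyDigit β x) n + lazyS β x n / prodUpTo β n = x := by
  induction n with
  | zero =>
    have h0 : β 0 ≠ 0 := (one_pos.trans (hβ 0)).ne'
    simp only [partialVal, zero_add, Finset.sum_range_one, prodUpTo_zero, lazyS, lazyDigit]
    field_simp
    ring
  | succ n ih =>
    have hP := (prodUpTo_pos hβ n).ne'
    have hb : β (n + 1) ≠ 0 := (one_pos.trans (hβ (n + 1))).ne'
    calc _ = partialVal β (lazyDigit β x) n + lazyS β x n / prodUpTo β n := by
          rw [partialVal_succ, prodUpTo_succ, add_assoc]
          congr 1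
          simp only [lazyS, lazyDigit]
          field_simp
          ring
      _ = x := ih

lemma monotone_toLex_lazyDigit (hβ : ∀ n, 1 < β n) :
    Monotone fun x => toLex (lazyDigit β x) := by
  intro z y hzy
  by_contra hlt
  obtain ⟨k, hyz, hk⟩ : lexLt (lazyDigit β y) (lazyDigit β z) := not_le.1 hlt
  have hP := prodUpTo_pos hβ k
  have hgap := partialVal_add_inv_le hβ hyz hk
  have hsz := lazyS_mem_Ioc (β := β) z k
  have hsy := lazyS_mem_Ioc (β := β) y k
  have hrem : lazyS β y k / prodUpTo β k - lazyS β z k / prodUpTo β k < (prodUpTo β k)⁻¹ := by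
    rw [← sub_div, ← one_div]
    exact div_lt_div_of_pos_right (by linarith [hsz.1, hsy.2]) hP
  linarith [partialVal_lazyDigit_add_lazyS_div hβ z k, partialVal_lazyDigit_add_lazyS_div hβ y k]

section ValidWord

variable {a : ℕ → ℤ}

lemma validWord.div_prodUpTo_mem_Icc (hβ : ∀ n, 1 < β n) (ha : validWord β a) (n : ℕ) :
    (a n : ℝ) / prodUpTo β n ∈ Set.Icc 0 (((⌈β n⌉ : ℝ) - 1) / prodUpTo β n) := by
  have hP := (prodUpTo_pos hβ n).le
  have h0 : (0 : ℝ) ≤ a n := by exact_mod_cast (ha n).1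
  have h1 : (a n : ℝ) ≤ ⌈β n⌉ - 1 := by exact_mod_cast (ha n).2
  exact ⟨div_nonneg h0 hP, div_le_div_of_nonneg_right h1 hP⟩

lemma valB_le_partialVal_add (hβ : ∀ n, 1 < β n) (hx : XBSummable β) (ha : validWord β a)
    (k : ℕ) : valB β a ≤ partialVal β a k + xB (shiftBase β (k + 1)) / prodUpTo β k := by
  have hbd := ha.div_prodUpTo_mem_Icc hβ
  have hsum : Summable fun n => (a n : ℝ) / prodUpTo β n :=
    Summable.of_nonneg_of_le (fun n => (hbd n).1) (fun n => (hbd n).2) hx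
  have htail : ∑' n, (a (n + (k + 1)) : ℝ) / prodUpTo β (n + (k + 1)) ≤
      ∑' n, ((⌈β (n + (k + 1))⌉ : ℝ) - 1) / prodUpTo β (n + (k + 1)) :=
    Summable.tsum_le_tsum (fun n => (hbd (n + (k + 1))).2)
      (hsum.comp_injective (add_left_injective (k + 1)))
      (Summable.comp_injective hx (add_left_injective (k + 1)))
  rw [xB_shiftBase hβ, mul_div_cancel_left₀ _ (prodUpTo_pos hβ k).ne', valB,
    ← hsum.sum_add_tsum_nat_add (k + 1)]
  exact add_le_add_right htail _

lemma valB_sub_lt (hβ : ∀ n, 1 < β n) (hx : XBSummable β) (ha : validWord β a) (y : ℝ)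
    (k : ℕ) : valB β a - y <
      partialVal β a k - partialVal β (lazyDigit β y) k + (prodUpTo β k)⁻¹ := by
  have hs := (lazyS_mem_Ioc (β := β) y k).1
  have hrem : xB (shiftBase β (k + 1)) / prodUpTo β k - lazyS β y k / prodUpTo β k <
      (prodUpTo β k)⁻¹ := by
    rw [← sub_div, ← one_div]
    exact div_lt_div_of_pos_right (by linarith) (prodUpTo_pos hβ k)
  linarith [valB_le_partialVal_add hβ hx ha k, partialVal_lazyDigit_add_lazyS_div hβ y k]

lemma valB_le_of_toLex_le (hβ : IsCantorBase β) (hx : XBSummable β) (ha : validWord β a)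
    {y : ℝ} (h : toLex a ≤ toLex (lazyDigit β y)) : valB β a ≤ y := by
  rcases h.lt_or_eq with hlt | h
  · obtain ⟨k, hay, hk⟩ : lexLt a (lazyDigit β y) := hlt
    linarith [valB_sub_lt hβ.one_lt hx ha y k, partialVal_add_inv_le hβ.one_lt hay hk]
  · rw [toLex_inj] at h
    refine sub_nonpos.1 (ge_of_tendsto' hβ.tendsto_inv_prodUpTo fun k => ?_)
    simpa [h] using (valB_sub_lt hβ.one_lt hx ha y k).le

end ValidWord

end CantorBase

/-- any word with digits in `[[0,⌈β_n⌉-1]]` whose value lies in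
`(x_β−1, x_β]` is lexicographically greater than `ℓ*_β(x_β−1)`. -/
theorem quasiLazy_lex_lt (β : ℕ → ℝ) (hβ : IsCantorBase β) (hx : XBSummable β)
    (ℓstar : ℕ → ℤ)
    (hl : Tendsto (lazyDigit β) (nhdsWithin (xB β - 1) (Set.Ioi (xB β - 1))) (nhds ℓstar))
    (a : ℕ → ℤ) (ha : validWord β a)
    (hv : valB β a ∈ Set.Ioc (xB β - 1) (xB β)) :
    lexLt ℓstar a := by
  obtain ⟨y, hy, hya⟩ := exists_between hv.1
  have hya' : toLex (lazyDigit β y) < toLex a :=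
    lt_of_not_ge fun h => (valB_le_of_toLex_le hβ hx ha h).not_gt hya
  suffices toLex ℓstar ≤ toLex (lazyDigit β y) from this.trans_lt hya'
  refine le_of_not_gt fun hyℓ => ?_
  obtain ⟨z, hyz, hz⟩ := ((hl.eventually_toLex_lt hyℓ).and (Ioo_mem_nhdsGT hy)).exists
  exact (monotone_toLex_lazyDigit hβ.one_lt hz.2.le).not_gt hyz
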